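/- Let M be a full SCM and M' a reduced SCM that share the same data (U1, p1, fX, fY) and (U2, p2, fZ), with the parameter γ of M' equal to P_M(S = 1). Then the probabilities of necessity and sufficiency coincide: P_M(Y_{X=1} = 1, Y_{X=0} = 0) = P_{M'}(Y_{X=1} = 1, Y_{X=0} = 0). -/

import Mathlib

open Finset

attribute [local instance] Classical.propDecidable

/-- A reduced SCM as in the paper: exogenous `U1`, `U2`, a parameter `γ` for the
binary pre-treatment variable `S`, and mechanisms `fX`, `fZ`, `fY`. -/
structure ReducedSCM (U1 U2 : Type) [Fintype U1] [Fintype U2] where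
  p1 : U1 → ℝ
  p2 : U2 → ℝ
  gamma : ℝ
  p1_nonneg : ∀ u, 0 ≤ p1 u
  p2_nonneg : ∀ u, 0 ≤ p2 u
  p1_sum : ∑ u, p1 u = 1
  p2_sum : ∑ u, p2 u = 1
  gamma_nonneg : 0 ≤ gamma
  gamma_le_one : gamma ≤ 1
  fX : U1 → Bool
  fZ : Bool → Bool → U2 → Bool
  fY : Bool → U1 → Bool

namespace ReducedSCM

variable {U1 U2 : Type} [Fintype U1] [Fintype U2]

/-- Probability of a unit `(u1, u2, s)`. -/
def w (M : ReducedSCM U1 U2) (u : U1 × U2 × Bool) : ℝ :=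
  M.p1 u.1 * M.p2 u.2.1 * (if u.2.2 then M.gamma else 1 - M.gamma)

/-- Probability of an event. -/
noncomputable def P (M : ReducedSCM U1 U2) (E : U1 × U2 × Bool → Prop) : ℝ :=
  ∑ u, if E u then M.w u else 0

/-- Conditional probability `P(A | B)`. -/
noncomputable def Pcond (M : ReducedSCM U1 U2) (A B : U1 × U2 × Bool → Prop) : ℝ :=
  M.P (fun u => A u ∧ B u) / M.P B

def S (_M : ReducedSCM U1 U2) (u : U1 × U2 × Bool) : Bool := u.2.2

def X (M : ReducedSCM U1 U2) (u : U1 × U2 × Bool) : Bool := M.fX u.1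

def Z (M : ReducedSCM U1 U2) (u : U1 × U2 × Bool) : Bool := M.fZ (M.S u) (M.X u) u.2.1

def Y (M : ReducedSCM U1 U2) (u : U1 × U2 × Bool) : Bool := M.fY (M.Z u) u.1

/-- Potential outcome `Y_{X=x}`. -/
def Yx (M : ReducedSCM U1 U2) (x : Bool) (u : U1 × U2 × Bool) : Bool :=
  M.fY (M.fZ (M.S u) x u.2.1) u.1

end ReducedSCM

/-- A full SCM as in the paper: exogenous `U1`, `U2`, `U5`, `U6` and mechanisms
`fT`, `fS`, `fX`, `fZ`, `fY`. -/
structure FullSCM (U1 U2 U5 U6 : Type)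
    [Fintype U1] [Fintype U2] [Fintype U5] [Fintype U6] where
  p1 : U1 → ℝ
  p2 : U2 → ℝ
  p5 : U5 → ℝ
  p6 : U6 → ℝ
  p1_nonneg : ∀ u, 0 ≤ p1 u
  p2_nonneg : ∀ u, 0 ≤ p2 u
  p5_nonneg : ∀ u, 0 ≤ p5 u
  p6_nonneg : ∀ u, 0 ≤ p6 u
  p1_sum : ∑ u, p1 u = 1
  p2_sum : ∑ u, p2 u = 1
  p5_sum : ∑ u, p5 u = 1
  p6_sum : ∑ u, p6 u = 1
  fT : U6 → Bool
  fS : Bool → U5 → Bool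
  fX : U1 → Bool
  fZ : Bool → Bool → U2 → Bool
  fY : Bool → U1 → Bool

namespace FullSCM

variable {U1 U2 U5 U6 : Type} [Fintype U1] [Fintype U2] [Fintype U5] [Fintype U6]

/-- Probability of a unit `(u1, u2, u5, u6)`. -/
def w (M : FullSCM U1 U2 U5 U6) (u : U1 × U2 × U5 × U6) : ℝ :=
  M.p1 u.1 * M.p2 u.2.1 * M.p5 u.2.2.1 * M.p6 u.2.2.2

/-- Probability of an event. -/
noncomputable def P (M : FullSCM U1 U2 U5 U6) (E : U1 × U2 × U5 × U6 → Prop) : ℝ :=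
  ∑ u, if E u then M.w u else 0

def T (M : FullSCM U1 U2 U5 U6) (u : U1 × U2 × U5 × U6) : Bool := M.fT u.2.2.2

def S (M : FullSCM U1 U2 U5 U6) (u : U1 × U2 × U5 × U6) : Bool := M.fS (M.T u) u.2.2.1

def X (M : FullSCM U1 U2 U5 U6) (u : U1 × U2 × U5 × U6) : Bool := M.fX u.1

def Z (M : FullSCM U1 U2 U5 U6) (u : U1 × U2 × U5 × U6) : Bool :=
  M.fZ (M.S u) (M.X u) u.2.1

def Y (M : FullSCM U1 U2 U5 U6) (u : U1 × U2 × U5 × U6) : Bool := M.fY (M.Z u) u.1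

/-- Potential outcome `Y_{X=x}`. -/
def Yx (M : FullSCM U1 U2 U5 U6) (x : Bool) (u : U1 × U2 × U5 × U6) : Bool :=
  M.fY (M.fZ (M.S u) x u.2.1) u.1

end FullSCM

/-! In the full model `S` is a function of `(u5, u6)` alone, which are independent of `(u1, u2)`,
while the PNS event depends on a unit only through `(u1, u2, S)`. Summing out `(u5, u6)` therefore
leaves exactly the reduced model's distribution on `(u1, u2, s)`: `S` becomes a Bernoulli variable
with parameter `P_M(S = 1)`, independent of `(u1, u2)`. -/

theorem sum_mul_comp_bool {ι : Type} [Fintype ι] (p : ι → ℝ) (hp : ∑ i, p i = 1)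
    (s : ι → Bool) (f : Bool → ℝ) :
    ∑ i, p i * f (s i) =
      (∑ i, if s i then p i else 0) * f true + (1 - ∑ i, if s i then p i else 0) * f false := by
  have hcompl : ∑ i, (if s i then 0 else p i) = 1 - ∑ i, if s i then p i else 0 := by
    rw [← hp, eq_sub_iff_add_eq, ← sum_add_distrib]
    exact sum_congr rfl fun i _ => by split_ifs <;> ring
  rw [← hcompl, sum_mul, sum_mul, ← sum_add_distrib]
  exact sum_congr rfl fun i _ => by cases s i <;> simp

theorem ReducedSCM.P_eq_sum {U1 U2 : Type} [Fintype U1] [Fintype U2] (M : ReducedSCM U1 U2)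
    (E : U1 × U2 × Bool → Prop) :
    M.P E = ∑ u1, ∑ u2, M.p1 u1 * M.p2 u2 *
        (M.gamma * (if E (u1, u2, true) then 1 else 0)
          + (1 - M.gamma) * (if E (u1, u2, false) then 1 else 0)) := by
  unfold P w
  simp only [Fintype.sum_prod_type, Fintype.sum_bool, if_true, Bool.false_eq_true, if_false]
  refine sum_congr rfl fun u1 _ => sum_congr rfl fun u2 _ => ?_
  split_ifs <;> ring

namespace FullSCM

variable {U1 U2 U5 U6 : Type} [Fintype U1] [Fintype U2] [Fintype U5] [Fintype U6]

def probS (M : FullSCM U1 U2 U5 U6) : ℝ :=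
  ∑ v : U5 × U6, if M.fS (M.fT v.2) v.1 then M.p5 v.1 * M.p6 v.2 else 0

theorem sum_p5_mul_p6 (M : FullSCM U1 U2 U5 U6) : ∑ v : U5 × U6, M.p5 v.1 * M.p6 v.2 = 1 := by
  rw [Fintype.sum_prod_type, ← Fintype.sum_mul_sum, M.p5_sum, M.p6_sum, one_mul]

theorem P_comp_S (M : FullSCM U1 U2 U5 U6) (E : U1 × U2 × Bool → Prop) :
    M.P (fun u => E (u.1, u.2.1, M.S u)) =
      ∑ u1, ∑ u2, M.p1 u1 * M.p2 u2 *
        (M.probS * (if E (u1, u2, true) then 1 else 0)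
          + (1 - M.probS) * (if E (u1, u2, false) then 1 else 0)) := by
  unfold P w S T
  rw [Fintype.sum_prod_type]
  refine sum_congr rfl fun u1 _ => ?_
  rw [Fintype.sum_prod_type]
  refine sum_congr rfl fun u2 _ => ?_
  rw [probS, ← sum_mul_comp_bool _ M.sum_p5_mul_p6 (fun v => M.fS (M.fT v.2) v.1)
    (fun s => if E (u1, u2, s) then 1 else 0), mul_sum]
  exact sum_congr rfl fun v _ => by split_ifs <;> ring

theorem P_S_true (M : FullSCM U1 U2 U5 U6) : M.P (fun u => M.S u = true) = M.probS := by
  simp only [M.P_comp_S (fun t => t.2.2 = true), if_true, Bool.false_eq_true, if_false, mul_one,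
    mul_zero, add_zero, ← sum_mul, ← Fintype.sum_mul_sum, M.p1_sum, M.p2_sum, one_mul]

theorem P_comp_S_eq_reduced (M : FullSCM U1 U2 U5 U6) (M' : ReducedSCM U1 U2)
    (hp1 : M'.p1 = M.p1) (hp2 : M'.p2 = M.p2) (hgamma : M'.gamma = M.P (fun u => M.S u = true))
    (E : U1 × U2 × Bool → Prop) :
    M.P (fun u => E (u.1, u.2.1, M.S u)) = M'.P E := by
  rw [M.P_comp_S, M'.P_eq_sum, hp1, hp2, hgamma, M.P_S_true]

end FullSCM

theorem full_reduced_same_PNS_general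
    {U1 U2 U5 U6 : Type} [Fintype U1] [Fintype U2] [Fintype U5] [Fintype U6]
    (M : FullSCM U1 U2 U5 U6) (M' : ReducedSCM U1 U2)
    (hp1 : M'.p1 = M.p1) (hp2 : M'.p2 = M.p2)
    (hfZ : M'.fZ = M.fZ) (hfY : M'.fY = M.fY)
    (hgamma : M'.gamma = M.P (fun u => M.S u = true)) :
    M.P (fun u => M.Yx true u = true ∧ M.Yx false u = false)
      = M'.P (fun u => M'.Yx true u = true ∧ M'.Yx false u = false) := by
  have hYx : ∀ x u, M.Yx x u = M'.Yx x (u.1, u.2.1, M.S u) := by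
    simp only [FullSCM.Yx, ReducedSCM.Yx, ReducedSCM.S, hfZ, hfY, implies_true]
  simp only [hYx]
  exact M.P_comp_S_eq_reduced M' hp1 hp2 hgamma
    (fun t => M'.Yx true t = true ∧ M'.Yx false t = false)

/-- A full SCM `M` and a reduced SCM `M'` sharing the data
`(U1, p1, fX, fY)` and `(U2, p2, fZ)`, with `γ = P_M(S = 1)`, have the same
probability of necessity and sufficiency `P(Y_{X=1} = 1, Y_{X=0} = 0)`. -/
theorem full_reduced_same_PNS
    {U1 U2 U5 U6 : Type} [Fintype U1] [Fintype U2] [Fintype U5] [Fintype U6]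
    (M : FullSCM U1 U2 U5 U6) (M' : ReducedSCM U1 U2)
    (hp1 : M'.p1 = M.p1) (hp2 : M'.p2 = M.p2)
    (hfX : M'.fX = M.fX) (hfZ : M'.fZ = M.fZ) (hfY : M'.fY = M.fY)
    (hgamma : M'.gamma = M.P (fun u => M.S u = true)) :
    M.P (fun u => M.Yx true u = true ∧ M.Yx false u = false)
      = M'.P (fun u => M'.Yx true u = true ∧ M'.Yx false u = false) :=
  full_reduced_same_PNS_general M M' hp1 hp2 hfZ hfY hgamma
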